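/- Let A be a C*-algebra and a ∈ A. If ρ(a*, a) = 0, then σ(a) ⊆ ℝ. -/

import Mathlib

/-!
Write `C = C_{a*,a}`. Left and right multiplications are commuting continuous ring homomorphisms
into `A →L[ℂ] A`, so `exp (t C) 1 = exp (t a*) * exp (-t a)`. Expanding the left side as
`∑ tⁿ/n! • Cⁿ 1`, the hypothesis `ρ(a*, a) = 0` makes this an entire function of exponential
type zero: `‖exp (t a*) * exp (-t a)‖ ≤ M_ε e^{ε|t|}` for every `ε > 0`. For `t = i s` with `s`
real the product is `x* x` with `x = exp (-i s a)`, so `‖x‖² ≤ M_ε e^{ε|s|}`; on the other hand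
`e^{-i s z} ∈ σ(x)` for `z ∈ σ(a)`, whence `e^{s Im z} ≤ ‖x‖`. Thus `e^{2 s Im z} ≤ M_ε e^{ε|s|}`
for all real `s` and all `ε > 0`, which forces `Im z = 0`.
-/

/-- The iterated commutator `C_{a,b}^n` applied to `1`, where `C_{a,b}(x) = a*x - x*b`. -/
noncomputable def citer {A : Type*} [Ring A] (a b : A) (n : ℕ) : A :=
  (fun x => a * x - x * b)^[n] 1

/-- `ρ(a,b) = limsup_n ‖C_{a,b}^n(1)‖^{1/n}`. -/
noncomputable def rho {A : Type*} [NormedRing A] (a b : A) : ℝ :=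
  Filter.limsup (fun n : ℕ => ‖citer a b n‖ ^ ((n : ℝ)⁻¹)) Filter.atTop

open NormedSpace Filter MulOpposite
open scoped Nat

lemma eq_zero_of_forall_exp_mul_le {y : ℝ}
    (h : ∀ ε > 0, ∃ M, ∀ s : ℝ, Real.exp (s * y) ≤ M * Real.exp (ε * |s|)) : y = 0 := by
  by_contra hy
  obtain ⟨M, hM⟩ := h (|y| / 2) (by positivity)
  have hexp := hM (2 * |M| / y)
  have hsy : 2 * |M| / y * y = |M| + |M| := by field_simp; ring
  have hs : |y| / 2 * |2 * |M| / y| = |M| := by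
    rw [abs_div, abs_mul, abs_abs, abs_two]; field_simp
  rw [hsy, hs, Real.exp_add] at hexp
  linarith [le_of_mul_le_mul_right hexp (Real.exp_pos _), Real.add_one_le_exp |M|, le_abs_self M]

lemma rpow_inv_natCast_le_max_one {x : ℝ} (hx : 0 ≤ x) (n : ℕ) : x ^ (n : ℝ)⁻¹ ≤ max 1 x := by
  rcases le_total x 1 with h | h
  · exact (Real.rpow_le_one hx h (by positivity)).trans (le_max_left _ _)
  rcases n.eq_zero_or_pos with rfl | hn
  · simp
  calc x ^ (n : ℝ)⁻¹ ≤ x ^ (1 : ℝ) :=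
        Real.rpow_le_rpow_of_exponent_le h (inv_le_one_of_one_le₀ (by exact_mod_cast hn))
    _ ≤ max 1 x := by rw [Real.rpow_one]; exact le_max_right _ _

lemma isBoundedUnder_rpow_inv_natCast_of_le_mul_pow {u : ℕ → ℝ} {C B : ℝ} (hu : ∀ n, 0 ≤ u n)
    (hC : 0 ≤ C) (hB : 0 ≤ B) (h : ∀ n, u n ≤ C * B ^ n) :
    IsBoundedUnder (· ≤ ·) atTop fun n => u n ^ (n : ℝ)⁻¹ := by
  refine isBoundedUnder_of_eventually_le (a := max 1 C * B) ?_
  filter_upwards [eventually_ne_atTop 0] with n hn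
  calc u n ^ (n : ℝ)⁻¹ ≤ (C * B ^ n) ^ (n : ℝ)⁻¹ :=
        Real.rpow_le_rpow (hu n) (h n) (by positivity)
    _ = C ^ (n : ℝ)⁻¹ * B := by
        rw [Real.mul_rpow hC (by positivity), Real.pow_rpow_inv_natCast hB hn]
    _ ≤ max 1 C * B := by gcongr; exact rpow_inv_natCast_le_max_one hC n

lemma exists_le_mul_pow_of_limsup_rpow_inv_natCast_lt {u : ℕ → ℝ} {ε : ℝ} (hu : ∀ n, 0 ≤ u n)
    (hε : 0 < ε) (hbdd : IsBoundedUnder (· ≤ ·) atTop fun n => u n ^ (n : ℝ)⁻¹)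
    (hlt : limsup (fun n => u n ^ (n : ℝ)⁻¹) atTop < ε) : ∃ M, ∀ n, u n ≤ M * ε ^ n := by
  have hev : ∀ᶠ n in atTop, u n / ε ^ n ≤ 1 := by
    filter_upwards [eventually_lt_of_limsup_lt hlt hbdd, eventually_ne_atTop 0] with n hn hn0
    rw [div_le_one (by positivity), ← Real.rpow_inv_natCast_pow (hu n) hn0]
    exact pow_le_pow_left₀ (Real.rpow_nonneg (hu n) _) hn.le n
  obtain ⟨M, hM⟩ := (isBoundedUnder_of_eventually_le hev).bddAbove_range
  exact ⟨M, fun n => (div_le_iff₀ (by positivity)).1 (hM ⟨n, rfl⟩)⟩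

lemma citer_succ {R : Type*} [Ring R] (a b : R) (n : ℕ) :
    citer a b (n + 1) = a * citer a b n - citer a b n * b :=
  Function.iterate_succ_apply' ..

section Commutator

variable {A : Type*} [NormedRing A]

lemma norm_citer_le (a b : A) (n : ℕ) : ‖citer a b n‖ ≤ ‖(1 : A)‖ * (‖a‖ + ‖b‖) ^ n := by
  induction n with
  | zero => simp [citer]
  | succ n ih =>
    rw [citer_succ]
    calc ‖a * citer a b n - citer a b n * b‖ ≤ (‖a‖ + ‖b‖) * ‖citer a b n‖ := by
          refine (norm_sub_le _ _).trans ?_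
          rw [add_mul, mul_comm ‖b‖]
          exact add_le_add (norm_mul_le _ _) (norm_mul_le _ _)
      _ ≤ ‖(1 : A)‖ * (‖a‖ + ‖b‖) ^ (n + 1) := by
          rw [pow_succ]
          nlinarith [norm_nonneg a, norm_nonneg b]

lemma citer_smul_smul {R : Type*} [CommSemiring R] [Module R A] [IsScalarTower R A A]
    [SMulCommClass R A A] (t : R) (a b : A) (n : ℕ) :
    citer (t • a) (t • b) n = t ^ n • citer a b n := by
  induction n with
  | zero => simp [citer]
  | succ n ih =>
    rw [citer_succ, citer_succ, ih, smul_mul_smul_comm, smul_mul_smul_comm, ← pow_succ', ← pow_succ, smul_sub]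

lemma exists_norm_citer_le_of_rho_lt (a b : A) {ε : ℝ} (hε : 0 < ε) (h : rho a b < ε) :
    ∃ M, ∀ n, ‖citer a b n‖ ≤ M * ε ^ n :=
  -- a `limsup` in `ℝ` is a junk value unless the sequence is bounded above
  exists_le_mul_pow_of_limsup_rpow_inv_natCast_lt (fun _ => norm_nonneg _) hε
    (isBoundedUnder_rpow_inv_natCast_of_le_mul_pow (fun _ => norm_nonneg _) (norm_nonneg _)
      (by positivity) (norm_citer_le a b)) h

variable [NormedAlgebra ℂ A]

noncomputable def mulLeftRingHom : A →+* (A →L[ℂ] A) where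
  toFun := ContinuousLinearMap.mul ℂ A
  map_one' := by ext; simp
  map_mul' x y := by ext; simp [mul_assoc]
  map_zero' := by simp
  map_add' := by simp

noncomputable def mulRightRingHom : Aᵐᵒᵖ →+* (A →L[ℂ] A) where
  toFun c := (ContinuousLinearMap.mul ℂ A).flip c.unop
  map_one' := by ext; simp
  map_mul' x y := by ext; simp [mul_assoc]
  map_zero' := by simp
  map_add' := by intros; ext; simp

@[simp] lemma mulLeftRingHom_apply (c x : A) : mulLeftRingHom c x = c * x := rfl

@[simp] lemma mulRightRingHom_apply (c : Aᵐᵒᵖ) (x : A) : mulRightRingHom c x = x * c.unop := rfl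

noncomputable def commOp (a b : A) : A →L[ℂ] A := mulLeftRingHom a - mulRightRingHom (op b)

lemma commOp_pow_apply_one (a b : A) (n : ℕ) : (commOp a b ^ n) 1 = citer a b n := by
  rw [FunLike.coe_pow_eq_iterate]; rfl

lemma commute_mulLeftRingHom_mulRightRingHom (x : A) (y : Aᵐᵒᵖ) :
    Commute (mulLeftRingHom x) (mulRightRingHom y) := by
  ext; simp [mul_assoc]

variable [CompleteSpace A]

-- The `_of_mem_ball` lemmas on `exp` work over `ℂ`; the plain ones need a `NormedAlgebra ℚ`
-- instance, which `A →L[ℂ] A` lacks.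
lemma mem_eball_expSeries_radius {B : Type*} [NormedRing B] [NormedAlgebra ℂ B] (x : B) :
    x ∈ Metric.eball (0 : B) (expSeries ℂ B).radius :=
  (expSeries_radius_eq_top ℂ B).symm ▸ edist_lt_top _ _

lemma exp_commOp_apply_one (a b : A) : exp (commOp a b) 1 = exp a * exp (-b) := by
  have hsplit : commOp a b = mulLeftRingHom a + mulRightRingHom (op (-b)) := by
    ext; simp [commOp, sub_eq_add_neg]
  rw [hsplit, exp_add_of_commute_of_mem_ball (𝕂 := ℂ)
      (commute_mulLeftRingHom_mulRightRingHom _ _) (mem_eball_expSeries_radius _)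
      (mem_eball_expSeries_radius _),
    ← map_exp_of_mem_ball mulLeftRingHom (ContinuousLinearMap.mul ℂ A).continuous _
      (mem_eball_expSeries_radius _),
    ← map_exp_of_mem_ball mulRightRingHom
      ((ContinuousLinearMap.mul ℂ A).flip.continuous.comp continuous_unop) _
      (mem_eball_expSeries_radius _), exp_op]
  simp

lemma hasSum_inv_factorial_smul_citer (a b : A) :
    HasSum (fun n => (n ! : ℂ)⁻¹ • citer a b n) (exp a * exp (-b)) := by
  rw [← exp_commOp_apply_one]
  simpa only [ContinuousLinearMap.apply_apply, smul_apply, commOp_pow_apply_one] using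
    (exp_series_hasSum_exp' (𝕂 := ℂ) (commOp a b)).mapL (ContinuousLinearMap.apply ℂ A 1)

lemma norm_exp_smul_mul_exp_neg_smul_le (a b : A) {M ε : ℝ}
    (hc : ∀ n, ‖citer a b n‖ ≤ M * ε ^ n) (t : ℂ) :
    ‖exp (t • a) * exp (-(t • b))‖ ≤ M * Real.exp (ε * ‖t‖) := by
  refine (hasSum_inv_factorial_smul_citer (t • a) (t • b)).norm_le_of_bounded
    ((Real.exp_eq_exp_ℝ ▸ expSeries_div_hasSum_exp (ε * ‖t‖)).mul_left M) fun n => ?_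
  calc ‖(n ! : ℂ)⁻¹ • citer (t • a) (t • b) n‖ = (n ! : ℝ)⁻¹ * ‖t‖ ^ n * ‖citer a b n‖ := by
        simp [citer_smul_smul, norm_smul, mul_assoc]
    _ ≤ (n ! : ℝ)⁻¹ * ‖t‖ ^ n * (M * ε ^ n) := by gcongr; exact hc n
    _ = M * ((ε * ‖t‖) ^ n / n !) := by ring

lemma norm_exp_mul_le_norm_exp_smul [NormOneClass A] {a : A} {z : ℂ} (hz : z ∈ spectrum ℂ a)
    (t : ℂ) : ‖Complex.exp (t * z)‖ ≤ ‖exp (t • a)‖ := by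
  have := NormOneClass.nontrivial (G := A)
  have hmem : t * z ∈ spectrum ℂ (t • a) :=
    spectrum.smul_eq_smul t a ⟨z, hz⟩ ▸ Set.smul_mem_smul_set hz
  rw [Complex.exp_eq_exp_ℂ]
  exact spectrum.norm_le_norm_of_mem (spectrum.exp_mem_exp _ hmem)

end Commutator

lemma norm_exp_sq {A : Type*} [NormedRing A] [StarRing A] [CStarRing A] [CompleteSpace A]
    [NormedAlgebra ℂ A] (a : A) : ‖exp a‖ ^ 2 = ‖exp (star a) * exp a‖ := by
  rw [sq, ← CStarRing.norm_star_mul_self, star_exp]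

/-- If ρ(a*, a) = 0 in a C*-algebra, then σ(a) ⊆ ℝ. -/
theorem stmt_14 {A : Type*} [NormedRing A] [StarRing A] [CStarRing A] [CompleteSpace A]
    [NormedAlgebra ℂ A] [StarModule ℂ A]
    (a : A) (h : rho (star a) a = 0) :
    ∀ z ∈ spectrum ℂ a, z.im = 0 := by
  intro z hz
  obtain hA | hA := subsingleton_or_nontrivial A
  · simp [spectrum.of_subsingleton] at hz
  suffices 2 * z.im = 0 by linarith
  refine eq_zero_of_forall_exp_mul_le fun ε hε => ?_
  obtain ⟨M, hM⟩ := exists_norm_citer_le_of_rho_lt (star a) a hε (h ▸ hε)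
  refine ⟨M, fun s => ?_⟩
  set t : ℂ := Complex.I * s
  calc Real.exp (s * (2 * z.im)) = ‖Complex.exp (-t * z)‖ ^ 2 := by
        rw [Complex.norm_exp, ← Real.exp_nat_mul]; congr 1; simp [t]; ring
    _ ≤ ‖exp (-t • a)‖ ^ 2 := by gcongr; exact norm_exp_mul_le_norm_exp_smul hz _
    _ = ‖exp (t • star a) * exp (-(t • a))‖ := by
        rw [norm_exp_sq, neg_smul]; simp [t, star_smul]
    _ ≤ M * Real.exp (ε * ‖t‖) := norm_exp_smul_mul_exp_neg_smul_le (star a) a hM t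
    _ = M * Real.exp (ε * |s|) := by simp [t]
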